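/- arXiv:2401.11387 — 3 statements merged into one kernel-verified Lean document; each statement's English description precedes it below -/
import Mathlib

section
/- Let A = [[0,u],[1,v]] over a field F have distinct nonzero eigenvalues λ₁, λ₂ with λ₁/λ₂ not a root of unity, and let h₁ = (α,β)·X₁, h₂ = (α,β)·X₂ for eigenvectors X₁, X₂. Then every homogeneous polynomial p ∈ F[α,β] of degree m satisfying σ(p) = c·p for some nonzero c ∈ F is of the form p = d·h₁^i·h₂^(m−i) for some nonzero d ∈ F and some 0 ≤ i ≤ m. -/
open MvPolynomial

/-!
The automorphism `σ` is the linear substitution given by `A = !![0, u; 1, v]`, and the matrix `P`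
with columns `w₁, w₂` satisfies `A * P = P * diagonal ![λ₁, λ₂]`, with `det P ≠ 0` because
`λ₁ ≠ λ₂`. Hence `q := linearSubst P⁻¹ p` is a homogeneous eigenvector of the diagonal substitution
`Xᵢ ↦ λᵢ Xᵢ`, which multiplies `X₀ ^ i * X₁ ^ (m - i)` by `λ₁ ^ i * λ₂ ^ (m - i)`. As `λ₁ / λ₂` is
not a root of unity these scalars are pairwise distinct, so `q` is a single monomial, and `p` is
its image under `linearSubst P`, which sends `X₀, X₁` to `h₁, h₂`.
-/

open scoped Matrix

theorem Matrix.mul_eq_mul_diagonal_of_mulVec_eq_smul {R m n : Type*} [CommSemiring R]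
    [Fintype m] [Fintype n] [DecidableEq n] {A : Matrix m m R} {P : Matrix m n R} {l : n → R}
    (h : ∀ j, A *ᵥ Pᵀ j = l j • Pᵀ j) : A * P = P * Matrix.diagonal l := by
  ext i j
  have := congrFun (h j) i
  simp only [Matrix.mulVec, dotProduct, Matrix.transpose_apply, Pi.smul_apply, smul_eq_mul] at this
  rw [Matrix.mul_apply, this, Matrix.mul_diagonal, mul_comm]

theorem eigenvector_zero_eq_of_companion {R : Type*} [CommRing R] {u v l : R} {w : Fin 2 → R}
    (h : !![0, u; 1, v] *ᵥ w = l • w) : w 0 = (l - v) * w 1 := by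
  have := congrFun h 1
  simp only [Matrix.mulVec, dotProduct, Matrix.of_apply, Matrix.cons_val', Matrix.cons_val_fin_one,
    Matrix.cons_val_one, Fin.sum_univ_two, Matrix.cons_val_zero, one_mul, Pi.smul_apply,
    smul_eq_mul] at this
  linear_combination this

theorem eigenvector_one_ne_zero_of_companion {R : Type*} [CommRing R] {u v l : R} {w : Fin 2 → R}
    (h : !![0, u; 1, v] *ᵥ w = l • w) (hw : w ≠ 0) : w 1 ≠ 0 := by
  intro h1
  have h0 : w 0 = 0 := by rw [eigenvector_zero_eq_of_companion h, h1, mul_zero]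
  exact hw (funext fun i => by fin_cases i <;> assumption)

theorem pow_injective_of_forall_pow_ne_one {G : Type*} [GroupWithZero G] {r : G} (hr0 : r ≠ 0)
    (hr : ∀ n : ℕ, 0 < n → r ^ n ≠ 1) : Function.Injective fun n : ℕ => r ^ n := by
  have : ¬IsOfFinOrder (Units.mk0 r hr0) := by
    rw [isOfFinOrder_iff_pow_eq_one]
    rintro ⟨n, hn, h⟩
    exact hr n hn (by simpa using congrArg Units.val h)
  intro i j hij
  exact injective_pow_iff_not_isOfFinOrder.mpr this (Units.ext (by simpa using hij))

theorem eq_of_add_eq_of_pow_mul_pow_eq {G : Type*} [CommGroupWithZero G] {l1 l2 : G} (hl1 : l1 ≠ 0)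
    (hl2 : l2 ≠ 0) (hroot : ∀ n : ℕ, 0 < n → (l1 / l2) ^ n ≠ 1) {i j i' j' : ℕ}
    (hsum : i + j = i' + j') (h : l1 ^ i * l2 ^ j = l1 ^ i' * l2 ^ j') : i = i' := by
  have hsplit (a b : ℕ) : l1 ^ a * l2 ^ b = (l1 / l2) ^ a * l2 ^ (a + b) := by
    rw [div_pow, pow_add]
    field_simp
  rw [hsplit, hsplit, hsum] at h
  exact pow_injective_of_forall_pow_ne_one (div_ne_zero hl1 hl2) hroot
    (mul_right_cancel₀ (pow_ne_zero _ hl2) h)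

theorem det_ne_zero_of_companion_eigenvectors {R : Type*} [CommRing R] [IsDomain R]
    {u v l1 l2 : R} {w1 w2 : Fin 2 → R} (hne : l1 ≠ l2) (hw1 : w1 ≠ 0) (hw2 : w2 ≠ 0)
    (hE1 : !![0, u; 1, v] *ᵥ w1 = l1 • w1) (hE2 : !![0, u; 1, v] *ᵥ w2 = l2 • w2) :
    (Matrix.of ![w1, w2]).det ≠ 0 := by
  have hdet : (Matrix.of ![w1, w2]).det = (l1 - l2) * (w1 1 * w2 1) := by
    rw [Matrix.det_fin_two]
    simp only [Matrix.of_apply, Matrix.cons_val_zero, Matrix.cons_val_one,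
      eigenvector_zero_eq_of_companion hE1, eigenvector_zero_eq_of_companion hE2]
    ring
  rw [hdet]
  exact mul_ne_zero (sub_ne_zero.mpr hne) (mul_ne_zero
    (eigenvector_one_ne_zero_of_companion hE1 hw1) (eigenvector_one_ne_zero_of_companion hE2 hw2))

namespace MvPolynomial

section linearSubst

variable {R ι : Type*} [CommSemiring R] [Fintype ι]

-- Columns rather than rows, so that `linearSubst (M * N) = (linearSubst M).comp (linearSubst N)`.
noncomputable def linearSubst (M : Matrix ι ι R) : MvPolynomial ι R →ₐ[R] MvPolynomial ι R :=
  aeval fun j => ∑ i, C (M i j) * X i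

@[simp]
theorem linearSubst_X (M : Matrix ι ι R) (j : ι) :
    linearSubst M (X j) = ∑ i, C (M i j) * X i :=
  aeval_X _ _

theorem linearSubst_one [DecidableEq ι] : linearSubst (1 : Matrix ι ι R) = AlgHom.id R _ := by
  refine algHom_ext fun j => ?_
  simp [Matrix.one_apply]

theorem linearSubst_mul (M N : Matrix ι ι R) :
    linearSubst (M * N) = (linearSubst M).comp (linearSubst N) := by
  refine algHom_ext fun k => ?_
  simp only [linearSubst_X, AlgHom.comp_apply, map_sum, map_mul, algHom_C, Matrix.mul_apply,
    Finset.sum_mul, Finset.mul_sum]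
  rw [Finset.sum_comm]
  simp [algebraMap_eq, mul_left_comm, mul_comm]

theorem IsHomogeneous.linearSubst {p : MvPolynomial ι R} {m : ℕ} (hp : p.IsHomogeneous m)
    (M : Matrix ι ι R) : (linearSubst M p).IsHomogeneous m :=
  one_mul m ▸ hp.aeval _ fun _ =>
    IsHomogeneous.sum _ _ 1 fun i _ => (isHomogeneous_X R i).C_mul _

theorem linearSubst_diagonal_monomial [DecidableEq ι] (a : ι → R) (s : ι →₀ ℕ) (r : R) :
    linearSubst (Matrix.diagonal a) (monomial s r) =
      monomial s ((s.prod fun i k => a i ^ k) * r) := by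
  have hX (j : ι) : linearSubst (Matrix.diagonal a) (X j) = C (a j) * X j := by
    simp [Matrix.diagonal_apply, apply_ite C, ite_mul]
  rw [monomial_eq, map_mul, map_finsuppProd, algHom_C, monomial_eq, C_mul, mul_comm (C _),
    mul_assoc, map_finsuppProd C]
  simp only [map_pow, hX, mul_pow, Finsupp.prod_mul, algebraMap_eq]

theorem coeff_linearSubst_diagonal [DecidableEq ι] (a : ι → R) (p : MvPolynomial ι R)
    (s : ι →₀ ℕ) :
    coeff s (linearSubst (Matrix.diagonal a) p) = (s.prod fun i k => a i ^ k) * coeff s p := by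
  induction p using MvPolynomial.induction_on' with
  | monomial t r =>
    rw [linearSubst_diagonal_monomial, coeff_monomial, coeff_monomial]
    split_ifs with h
    · rw [h]
    · rw [mul_zero]
  | add p q hp hq => rw [map_add, coeff_add, coeff_add, hp, hq, mul_add]

theorem prod_pow_eq_of_linearSubst_diagonal_eq [IsDomain R] [DecidableEq ι] {a : ι → R} {c : R}
    {p : MvPolynomial ι R} (hp : linearSubst (Matrix.diagonal a) p = C c * p) {s : ι →₀ ℕ}
    (hs : s ∈ p.support) : (s.prod fun i k => a i ^ k) = c := by
  have := congrArg (coeff s) hp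
  rw [coeff_linearSubst_diagonal, coeff_C_mul] at this
  exact mul_right_cancel₀ (mem_support_iff.mp hs) this

end linearSubst

section CommRing

variable {R ι : Type*} [CommRing R] [Fintype ι] [DecidableEq ι]

theorem linearSubst_linearSubst_inv {M : Matrix ι ι R} (hM : IsUnit M.det) (p : MvPolynomial ι R) :
    linearSubst M (linearSubst M⁻¹ p) = p := by
  rw [← AlgHom.comp_apply, ← linearSubst_mul, M.mul_nonsing_inv hM, linearSubst_one]
  rfl

theorem linearSubst_inv_eq_C_mul_of_mul_eq_mul {A P D : Matrix ι ι R} (hP : IsUnit P.det)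
    (hAP : A * P = P * D) {p : MvPolynomial ι R} {c : R} (hp : linearSubst A p = C c * p) :
    linearSubst D (linearSubst P⁻¹ p) = C c * linearSubst P⁻¹ p := by
  have hDP : D * P⁻¹ = P⁻¹ * A := by
    calc D * P⁻¹ = P⁻¹ * (P * D) * P⁻¹ := by rw [P.nonsing_inv_mul_cancel_left _ hP]
      _ = P⁻¹ * A * P * P⁻¹ := by rw [← hAP, Matrix.mul_assoc P⁻¹ A P]
      _ = P⁻¹ * A := Matrix.mul_nonsing_inv_cancel_right _ _ hP
  rw [← AlgHom.comp_apply, ← linearSubst_mul, hDP, linearSubst_mul, AlgHom.comp_apply, hp, map_mul,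
    algHom_C, algebraMap_eq]

end CommRing

end MvPolynomial

namespace MvPolynomial

theorem linearSubst_transpose_of_monomial {R : Type*} [CommSemiring R] (w1 w2 : Fin 2 → R)
    (s : Fin 2 →₀ ℕ) (r : R) :
    linearSubst (Matrix.of ![w1, w2])ᵀ (monomial s r) =
      C r * (C (w1 0) * X 0 + C (w1 1) * X 1) ^ s 0 * (C (w2 0) * X 0 + C (w2 1) * X 1) ^ s 1 := by
  rw [linearSubst, aeval_monomial, Finsupp.prod_fintype _ _ (by simp), Fin.prod_univ_two,
    algebraMap_eq, mul_assoc]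
  simp [Fin.sum_univ_two]

theorem IsHomogeneous.add_eq_of_mem_support {R : Type*} [CommSemiring R]
    {p : MvPolynomial (Fin 2) R} {m : ℕ} (hp : p.IsHomogeneous m) {s : Fin 2 →₀ ℕ}
    (hs : s ∈ p.support) : s 0 + s 1 = m := by
  by_contra h
  refine mem_support_iff.mp hs (hp.coeff_eq_zero ?_)
  rwa [Finsupp.degree_eq_sum, Fin.sum_univ_two]

theorem eq_monomial_of_linearSubst_diagonal_eq {F : Type*} [Field F] {l1 l2 c : F}
    (hl1 : l1 ≠ 0) (hl2 : l2 ≠ 0) (hroot : ∀ n : ℕ, 0 < n → (l1 / l2) ^ n ≠ 1)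
    {q : MvPolynomial (Fin 2) F} {m : ℕ} (hq : q.IsHomogeneous m)
    (hscale : linearSubst (Matrix.diagonal ![l1, l2]) q = C c * q) {s : Fin 2 →₀ ℕ}
    (hs : s ∈ q.support) : q = monomial s (coeff s q) := by
  have hweight {t : Fin 2 →₀ ℕ} (ht : t ∈ q.support) : l1 ^ t 0 * l2 ^ t 1 = c := by
    rw [← prod_pow_eq_of_linearSubst_diagonal_eq hscale ht, Finsupp.prod_fintype _ _ (by simp),
      Fin.prod_univ_two]
    rfl
  refine eq_monomial_of_support_subset_singleton fun t ht => ?_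
  have h0 : t 0 = s 0 := eq_of_add_eq_of_pow_mul_pow_eq hl1 hl2 hroot
    (by rw [hq.add_eq_of_mem_support ht, hq.add_eq_of_mem_support hs])
    (by rw [hweight ht, hweight hs])
  have h1 : t 1 = s 1 := by
    have := hq.add_eq_of_mem_support ht
    have := hq.add_eq_of_mem_support hs
    omega
  ext i
  fin_cases i
  exacts [h0, h1]

end MvPolynomial

theorem stmt4_general {F : Type*} [Field F] (u v : F)
    (σ : MvPolynomial (Fin 2) F ≃ₐ[F] MvPolynomial (Fin 2) F)
    (hα : σ (X 0) = X 1) (hβ : σ (X 1) = C u * X 0 + C v * X 1)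
    (lam1 lam2 : F) (hne : lam1 ≠ lam2) (hl1 : lam1 ≠ 0) (hl2 : lam2 ≠ 0)
    (hroot : ∀ n : ℕ, 0 < n → (lam1 / lam2) ^ n ≠ 1)
    (w1 w2 : Fin 2 → F) (hw1 : w1 ≠ 0) (hw2 : w2 ≠ 0)
    (hE1 : (!![(0 : F), u; 1, v]).mulVec w1 = lam1 • w1)
    (hE2 : (!![(0 : F), u; 1, v]).mulVec w2 = lam2 • w2)
    (p : MvPolynomial (Fin 2) F) (m : ℕ) (hp : p.IsHomogeneous m) (hp0 : p ≠ 0)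
    (c : F) (hσ : σ p = C c * p) :
    ∃ d : F, d ≠ 0 ∧ ∃ i : ℕ, i ≤ m ∧
      p = C d * (C (w1 0) * X 0 + C (w1 1) * X 1) ^ i *
            (C (w2 0) * X 0 + C (w2 1) * X 1) ^ (m - i) := by
  set A : Matrix (Fin 2) (Fin 2) F := !![0, u; 1, v]
  set P : Matrix (Fin 2) (Fin 2) F := (Matrix.of ![w1, w2])ᵀ
  have hσA : (σ : MvPolynomial (Fin 2) F →ₐ[F] _) = linearSubst A := algHom_ext fun i => by
    fin_cases i <;> simp [A, hα, hβ, Fin.sum_univ_two]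
  have hP : IsUnit P.det := by
    rw [Matrix.det_transpose, isUnit_iff_ne_zero]
    exact det_ne_zero_of_companion_eigenvectors hne hw1 hw2 hE1 hE2
  have hAP : A * P = P * Matrix.diagonal ![lam1, lam2] :=
    Matrix.mul_eq_mul_diagonal_of_mulVec_eq_smul fun j => by fin_cases j <;> assumption
  set q := linearSubst P⁻¹ p
  have hq : q.IsHomogeneous m := hp.linearSubst P⁻¹
  have hAp : linearSubst A p = C c * p := by rw [← hσA]; exact hσ
  have hscale := linearSubst_inv_eq_C_mul_of_mul_eq_mul hP hAP hAp
  have hpq : linearSubst P q = p := linearSubst_linearSubst_inv hP p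
  obtain ⟨s, hs⟩ : q.support.Nonempty :=
    support_nonempty.mpr fun hq0 => hp0 (by rw [← hpq, hq0, map_zero])
  have hdeg := hq.add_eq_of_mem_support hs
  refine ⟨coeff s q, mem_support_iff.mp hs, s 0, by omega, ?_⟩
  conv_lhs => rw [← hpq, eq_monomial_of_linearSubst_diagonal_eq hl1 hl2 hroot hq hscale hs]
  rw [linearSubst_transpose_of_monomial, show m - s 0 = s 1 by omega]

theorem stmt4 {F : Type*} [Field F] (u v : F) (hu : u ≠ 0)
    (σ : MvPolynomial (Fin 2) F ≃ₐ[F] MvPolynomial (Fin 2) F)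
    (hα : σ (X 0) = X 1) (hβ : σ (X 1) = C u * X 0 + C v * X 1)
    (lam1 lam2 : F) (hne : lam1 ≠ lam2) (hl1 : lam1 ≠ 0) (hl2 : lam2 ≠ 0)
    (hroot : ∀ n : ℕ, 0 < n → (lam1 / lam2) ^ n ≠ 1)
    (w1 w2 : Fin 2 → F) (hw1 : w1 ≠ 0) (hw2 : w2 ≠ 0)
    (hE1 : (!![(0 : F), u; 1, v]).mulVec w1 = lam1 • w1)
    (hE2 : (!![(0 : F), u; 1, v]).mulVec w2 = lam2 • w2)
    (p : MvPolynomial (Fin 2) F) (m : ℕ) (hp : p.IsHomogeneous m) (hp0 : p ≠ 0)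
    (c : F) (hc : c ≠ 0) (hσ : σ p = C c * p) :
    ∃ d : F, d ≠ 0 ∧ ∃ i : ℕ, i ≤ m ∧
      p = C d * (C (w1 0) * X 0 + C (w1 1) * X 1) ^ i *
            (C (w2 0) * X 0 + C (w2 1) * X 1) ^ (m - i) :=
  stmt4_general u v σ hα hβ lam1 lam2 hne hl1 hl2 hroot w1 w2 hw1 hw2 hE1 hE2 p m hp hp0 c hσ
end

section
/- Let σ be a degree-preserving automorphism of F[α,β]. For a nonzero q ∈ F[α,β], Dis_σ(q) = +∞ if and only if q has a nonconstant semi-periodic factor. -/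
/-!
If `q` and `σ^m q` share an irreducible factor `e`, pick irreducible factors `g ~ e` and
`g' ~ σ^(-m) e` of `q`, so that `σ^m g' ~ g`. Since `q` has only finitely many irreducible
factors up to association, two of infinitely many such `m < n` give the same pair `(g, g')`,
whence `σ^(n-m) g' ~ g'`; units of `F[α,β]` are the nonzero constants.
Conversely, if `σ^k p ~ p` for a nonconstant `p ∣ q`, then `p ∣ σ^(kj) q` for every `j`.
-/

open MvPolynomial

/-- The spread of two polynomials: the set of natural numbers `m` such that
`p` and `σ^m q` have a nontrivial (nonconstant) common factor. -/
def Spr {F : Type*} [Field F]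
    (σ : MvPolynomial (Fin 2) F ≃ₐ[F] MvPolynomial (Fin 2) F)
    (p q : MvPolynomial (Fin 2) F) : Set ℕ :=
  {m | ∃ d : MvPolynomial (Fin 2) F, 0 < d.totalDegree ∧ d ∣ p ∧ d ∣ (σ ^ m) q}

/-- The dispersion: `⊥` (playing the role of `-1`) if the spread is empty, its maximum
if finite nonempty, and `⊤` (i.e. `+∞`) if the spread is infinite. -/
noncomputable def Dis {F : Type*} [Field F]
    (σ : MvPolynomial (Fin 2) F ≃ₐ[F] MvPolynomial (Fin 2) F)
    (p q : MvPolynomial (Fin 2) F) : WithBot ℕ∞ :=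
  sSup ((fun m : ℕ => ((m : ℕ∞) : WithBot ℕ∞)) '' Spr σ p q)

lemma sSup_image_natCast_eq_top_iff (S : Set ℕ) :
    sSup ((fun m : ℕ => ((m : ℕ∞) : WithBot ℕ∞)) '' S) = ⊤ ↔ S.Infinite := by
  constructor
  · intro h hfin
    rcases S.eq_empty_or_nonempty with rfl | hne
    · simp at h
    · obtain ⟨m, -, hm⟩ := h ▸ (hne.image _).csSup_mem (hfin.image _)
      exact ENat.natCast_ne_top m (WithBot.coe_inj.mp hm)
  · intro hinf
    refine sSup_eq_top.mpr fun b hb => ?_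
    obtain ⟨n, hn⟩ : ∃ n : ℕ, b ≤ ((n : ℕ∞) : WithBot ℕ∞) := by
      cases b with
      | bot => exact ⟨0, bot_le⟩
      | coe t =>
        lift t to ℕ using (WithBot.coe_lt_coe.mp hb).ne
        exact ⟨t, le_rfl⟩
    obtain ⟨m, hmS, hnm⟩ := hinf.exists_gt n
    exact ⟨_, ⟨m, hmS, rfl⟩,
      hn.trans_lt (WithBot.coe_lt_coe.mpr (ENat.natCast_lt_natCast.mpr hnm))⟩


section AutomorphismOrbits

variable {R A : Type*} [CommSemiring R] [CommSemiring A] [Algebra R A] (σ : A ≃ₐ[R] A)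

lemma AlgEquiv.pow_sub_apply_eq_symm_pow_apply {m n : ℕ} (hmn : m ≤ n) (x : A) :
    (σ ^ (n - m)) x = (σ ^ m).symm ((σ ^ n) x) := by
  rw [← pow_mul_pow_sub σ hmn, AlgEquiv.mul_apply, AlgEquiv.symm_apply_apply]

lemma Associated.pow_apply_mul {p : A} {k : ℕ} (h : Associated p ((σ ^ k) p)) (j : ℕ) :
    Associated p ((σ ^ (k * j)) p) := by
  induction j with
  | zero => simp
  | succ j ih =>
    rw [mul_add_one, pow_add, AlgEquiv.mul_apply]
    exact ih.trans (h.map (σ ^ (k * j)))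

lemma exists_associated_pow_apply_of_infinite {T : Set A} (hT : T.Finite)
    (h : {m : ℕ | ∃ g ∈ T, ∃ g' ∈ T, Associated ((σ ^ m) g') g}.Infinite) :
    ∃ p ∈ T, ∃ k, 0 < k ∧ Associated p ((σ ^ k) p) := by
  have hpair : ∀ m ∈ {m : ℕ | ∃ g ∈ T, ∃ g' ∈ T, Associated ((σ ^ m) g') g},
      ∃ x ∈ T ×ˢ T, Associated ((σ ^ m) x.2) x.1 := by
    rintro m ⟨g, hg, g', hg', hassoc⟩
    exact ⟨(g, g'), ⟨hg, hg'⟩, hassoc⟩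
  choose! f hfT hf using hpair
  obtain ⟨m, hm, n, hn, hmn, hfmn⟩ := h.exists_lt_map_eq_of_mapsTo hfT (hT.prod hT)
  refine ⟨(f m).2, (hfT m hm).2, n - m, Nat.sub_pos_of_lt hmn, ?_⟩
  have hσ : Associated ((σ ^ m) (f m).2) ((σ ^ n) (f m).2) :=
    (hf m hm).trans (hfmn ▸ (hf n hn).symm)
  simpa only [AlgEquiv.symm_apply_apply, ← σ.pow_sub_apply_eq_symm_pow_apply hmn.le] using
    hσ.map (σ ^ m).symm

open UniqueFactorizationMonoid in
lemma exists_mem_factors_associated_pow_apply [UniqueFactorizationMonoid A] {q e : A}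
    (hq : q ≠ 0) (he : Irreducible e) (heq : e ∣ q) {m : ℕ} (heσ : e ∣ (σ ^ m) q) :
    ∃ g ∈ factors q, ∃ g' ∈ factors q, Associated ((σ ^ m) g') g := by
  obtain ⟨g, hg, heg⟩ := exists_mem_factors_of_dvd hq he heq
  have hσe : (σ ^ m).symm e ∣ q := by
    simpa only [AlgEquiv.symm_apply_apply] using map_dvd (σ ^ m).symm heσ
  obtain ⟨g', hg', heg'⟩ := exists_mem_factors_of_dvd hq (he.map (σ ^ m).symm) hσe
  refine ⟨g, hg, g', hg', ?_⟩
  have hσg' := (heg'.map (σ ^ m)).symm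
  rw [AlgEquiv.apply_symm_apply] at hσg'
  exact hσg'.trans heg

end AutomorphismOrbits

namespace MvPolynomial

variable {ι K : Type*} [Field K]

lemma totalDegree_pos_iff_not_isUnit {p : MvPolynomial ι K} (hp : p ≠ 0) :
    0 < p.totalDegree ↔ ¬IsUnit p := by
  rw [isUnit_iff_totalDegree_of_isReduced, isUnit_iff_ne_zero, Nat.pos_iff_ne_zero]
  refine ⟨fun hdeg hunit => hdeg hunit.2, fun hunit hdeg => hunit ⟨fun h0 => hp ?_, hdeg⟩⟩
  rw [totalDegree_eq_zero_iff_eq_C.mp hdeg, h0, C_0]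

lemma totalDegree_pos_of_irreducible {p : MvPolynomial ι K} (hp : Irreducible p) :
    0 < p.totalDegree :=
  (totalDegree_pos_iff_not_isUnit hp.ne_zero).mpr hp.not_isUnit

lemma associated_iff_exists_C_mul {p q : MvPolynomial ι K} :
    Associated p q ↔ ∃ c : K, c ≠ 0 ∧ q = C c * p := by
  constructor
  · rintro ⟨u, rfl⟩
    obtain ⟨c, hc, hu⟩ := isUnit_iff_eq_C_of_isReduced.mp u.isUnit
    exact ⟨c, hc.ne_zero, by rw [hu, mul_comm]⟩
  · rintro ⟨c, hc, rfl⟩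
    exact (associated_unit_mul_left p (C c) (hc.isUnit.map C)).symm

end MvPolynomial

section Dispersion

variable {F : Type*} [Field F] {σ : MvPolynomial (Fin 2) F ≃ₐ[F] MvPolynomial (Fin 2) F}

lemma Dis_eq_top_iff {p q : MvPolynomial (Fin 2) F} : Dis σ p q = ⊤ ↔ (Spr σ p q).Infinite :=
  sSup_image_natCast_eq_top_iff _

lemma Spr_eq_setOf_irreducible {p q : MvPolynomial (Fin 2) F} (hp : p ≠ 0) :
    Spr σ p q = {m | ∃ e, Irreducible e ∧ e ∣ p ∧ e ∣ (σ ^ m) q} := by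
  ext m
  constructor
  · rintro ⟨d, hd, hdp, hdq⟩
    have hd0 : d ≠ 0 := by rintro rfl; exact hp (zero_dvd_iff.mp hdp)
    obtain ⟨e, he, hed⟩ :=
      WfDvdMonoid.exists_irreducible_factor ((totalDegree_pos_iff_not_isUnit hd0).mp hd) hd0
    exact ⟨e, he, hed.trans hdp, hed.trans hdq⟩
  · rintro ⟨e, he, hep, heq⟩
    exact ⟨e, totalDegree_pos_of_irreducible he, hep, heq⟩

lemma Spr_infinite_of_associated_pow_apply {p q : MvPolynomial (Fin 2) F}
    (hp : 0 < p.totalDegree) (hpq : p ∣ q) {k : ℕ} (hk : 0 < k) (hper : Associated p ((σ ^ k) p)) :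
    (Spr σ q q).Infinite :=
  Set.infinite_of_injective_forall_mem (mul_right_injective₀ hk.ne') fun j =>
    ⟨p, hp, hpq, (hper.pow_apply_mul σ j).dvd.trans (map_dvd _ hpq)⟩

end Dispersion

open UniqueFactorizationMonoid in
theorem stmt10_general {F : Type*} [Field F]
    (σ : MvPolynomial (Fin 2) F ≃ₐ[F] MvPolynomial (Fin 2) F)
    (q : MvPolynomial (Fin 2) F) (hq : q ≠ 0) :
    Dis σ q q = ⊤ ↔
      ∃ p : MvPolynomial (Fin 2) F, p ∣ q ∧ 0 < p.totalDegree ∧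
        ∃ k : ℕ, 0 < k ∧ ∃ c : F, c ≠ 0 ∧ (σ ^ k) p = C c * p := by
  rw [Dis_eq_top_iff]
  constructor
  · intro hinf
    rw [Spr_eq_setOf_irreducible hq] at hinf
    have hpairs :
        {m : ℕ | ∃ g ∈ factors q, ∃ g' ∈ factors q, Associated ((σ ^ m) g') g}.Infinite := by
      refine hinf.mono ?_
      rintro m ⟨e, he, heq, heσ⟩
      exact exists_mem_factors_associated_pow_apply σ hq he heq heσ
    obtain ⟨p, hp, k, hk, hper⟩ :=
      exists_associated_pow_apply_of_infinite σ (factors q).finite_toSet hpairs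
    exact ⟨p, dvd_of_mem_factors hp, totalDegree_pos_of_irreducible (irreducible_of_factor p hp),
      k, hk, associated_iff_exists_C_mul.mp hper⟩
  · rintro ⟨p, hpq, hp, k, hk, c, hc, hper⟩
    exact Spr_infinite_of_associated_pow_apply hp hpq hk
      (associated_iff_exists_C_mul.mpr ⟨c, hc, hper⟩)

theorem stmt10 {F : Type*} [Field F]
    (σ : MvPolynomial (Fin 2) F ≃ₐ[F] MvPolynomial (Fin 2) F)
    (hdeg : ∀ p : MvPolynomial (Fin 2) F, (σ p).totalDegree = p.totalDegree)
    (q : MvPolynomial (Fin 2) F) (hq : q ≠ 0) :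
    Dis σ q q = ⊤ ↔
      ∃ p : MvPolynomial (Fin 2) F, p ∣ q ∧ 0 < p.totalDegree ∧
        ∃ k : ℕ, 0 < k ∧ ∃ c : F, c ≠ 0 ∧ (σ ^ k) p = C c * p :=
  stmt10_general σ q hq
end

section
/- Let σ be a degree-preserving automorphism of F[α,β], and let a, b ∈ F[α,β] with splitting factorizations a = a_∞·ā and b = b_∞·b̄ (every irreducible factor of a_∞, b_∞ has infinite dispersion; every irreducible factor of ā, b̄ has finite dispersion). Then Spr_σ(ā, b̄) is a finite set. -/
open MvPolynomial


open MvPolynomial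

/-! If `Spr σ ā b̄` were infinite, then, since it is covered by finitely many pairs `(x, y)` of
irreducible factors of `ā` and `b̄`, two shifts `m < m'` would pair the same `x` and `y`:
`x ~ σ^m y ~ σ^m' y`. Pulling back by `σ^m`, the factor `y` is periodic, `y ~ σ^k y` with
`k = m' - m > 0`, so every multiple of `k` lies in `Spr σ y y` and `Dis σ y y = ⊤`,
contradicting the hypothesis on `b̄`. -/

section Periodicity

variable {R A : Type*} [CommSemiring R] [CommSemiring A] [Algebra R A] (σ : A ≃ₐ[R] A)

lemma AlgEquiv.pow_add_apply (m k : ℕ) (x : A) : (σ ^ (m + k)) x = (σ ^ m) ((σ ^ k) x) := by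
  rw [pow_add, AlgEquiv.mul_apply]

lemma associated_pow_apply_of_associated_pow_add_apply {y : A} {m k : ℕ}
    (h : Associated ((σ ^ m) y) ((σ ^ (m + k)) y)) : Associated y ((σ ^ k) y) := by
  rw [σ.pow_add_apply] at h
  simpa [-AlgEquiv.coe_pow] using h.map (σ ^ m).symm

lemma associated_pow_mul_apply {y : A} {k : ℕ} (h : Associated y ((σ ^ k) y)) (j : ℕ) :
    Associated y ((σ ^ (j * k)) y) := by
  induction j with
  | zero => simp
  | succ j ih =>
    rw [add_one_mul, σ.pow_add_apply]
    exact ih.trans (h.map (σ ^ (j * k)))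

open UniqueFactorizationMonoid in
lemma exists_mem_factors_associated_apply [IsDomain A] [UniqueFactorizationMonoid A]
    {p q r : A} (hp : p ≠ 0) (hq : q ≠ 0) (hr : Irreducible r) (hrp : r ∣ p) (hrq : r ∣ σ q) :
    ∃ x ∈ factors p, ∃ y ∈ factors q, Associated x (σ y) := by
  obtain ⟨x, hx, hrx⟩ := exists_mem_factors_of_dvd hp hr hrp
  have hrq' : σ.symm r ∣ q := by simpa using map_dvd σ.symm hrq
  obtain ⟨y, hy, hry⟩ := exists_mem_factors_of_dvd hq (hr.map σ.symm) hrq'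
  exact ⟨x, hx, y, hy, hrx.symm.trans (by simpa using hry.map σ)⟩

end Periodicity

lemma MvPolynomial.totalDegree_pos_iff_not_isUnit_s11 {ι F : Type*} [Field F]
    {p : MvPolynomial ι F} (hp : p ≠ 0) : 0 < p.totalDegree ↔ ¬IsUnit p := by
  rw [isUnit_iff_totalDegree_of_isReduced, isUnit_iff_ne_zero, Nat.pos_iff_ne_zero]
  refine ⟨fun h hu => h hu.2, fun h h0 => h ⟨fun hc => hp ?_, h0⟩⟩
  rw [totalDegree_eq_zero_iff_eq_C.1 h0, hc, C_0]

section Spread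

variable {F : Type*} [Field F] (σ : MvPolynomial (Fin 2) F ≃ₐ[F] MvPolynomial (Fin 2) F)

lemma mem_Spr_iff {p q : MvPolynomial (Fin 2) F} {m : ℕ} :
    m ∈ Spr σ p q ↔ ∃ r, Irreducible r ∧ r ∣ p ∧ r ∣ (σ ^ m) q := by
  constructor
  · rintro ⟨d, hd, hdp, hdq⟩
    have hd0 : d ≠ 0 := by rintro rfl; simp at hd
    obtain ⟨r, hr, hrd⟩ :=
      WfDvdMonoid.exists_irreducible_factor ((totalDegree_pos_iff_not_isUnit_s11 hd0).1 hd) hd0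
    exact ⟨r, hr, hrd.trans hdp, hrd.trans hdq⟩
  · rintro ⟨r, hr, hrp, hrq⟩
    exact ⟨r, (totalDegree_pos_iff_not_isUnit_s11 hr.ne_zero).2 hr.not_isUnit, hrp, hrq⟩

lemma Dis_eq_top_of_infinite {p q : MvPolynomial (Fin 2) F} (h : (Spr σ p q).Infinite) :
    Dis σ p q = ⊤ := by
  refine sSup_eq_top.2 fun b hb => ?_
  obtain ⟨n, hn⟩ : ∃ n : ℕ, b ≤ ((n : ℕ∞) : WithBot ℕ∞) := by
    induction b using WithBot.recBotCoe with
    | bot => exact ⟨0, bot_le⟩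
    | coe c =>
      lift c to ℕ using WithBot.coe_lt_coe.1 hb |>.ne
      exact ⟨c, le_rfl⟩
  obtain ⟨m, hm, hnm⟩ := h.exists_gt n
  exact ⟨_, ⟨m, hm, rfl⟩, hn.trans_lt (WithBot.coe_lt_coe.2 (Nat.cast_lt.2 hnm))⟩

lemma Dis_self_eq_top_of_associated_pow_apply {r : MvPolynomial (Fin 2) F} (hr : Irreducible r)
    {k : ℕ} (hk : 0 < k) (h : Associated r ((σ ^ k) r)) : Dis σ r r = ⊤ :=
  Dis_eq_top_of_infinite σ <| Set.infinite_of_injective_forall_mem (mul_left_injective₀ hk.ne')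
    fun j => (mem_Spr_iff σ).2 ⟨r, hr, dvd_rfl, (associated_pow_mul_apply σ h j).dvd⟩

open UniqueFactorizationMonoid in
lemma exists_periodic_factor_of_Spr_infinite {p q : MvPolynomial (Fin 2) F} (hp : p ≠ 0)
    (hq : q ≠ 0) (h : (Spr σ p q).Infinite) :
    ∃ y, Irreducible y ∧ y ∣ q ∧ ∃ k, 0 < k ∧ Associated y ((σ ^ k) y) := by
  classical
  have hpair : ∀ m ∈ Spr σ p q, ∃ xy ∈ (factors p).toFinset ×ˢ (factors q).toFinset,
      Associated xy.1 ((σ ^ m) xy.2) := by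
    intro m hm
    obtain ⟨r, hr, hrp, hrq⟩ := (mem_Spr_iff σ).1 hm
    obtain ⟨x, hx, y, hy, hxy⟩ := exists_mem_factors_associated_apply (σ ^ m) hp hq hr hrp hrq
    exact ⟨(x, y), Finset.mem_product.2 ⟨Multiset.mem_toFinset.2 hx, Multiset.mem_toFinset.2 hy⟩,
      hxy⟩
  choose! f hf_mem hf_assoc using hpair
  obtain ⟨m, hm, m', hm', hlt, hf⟩ := h.exists_lt_map_eq_of_mapsTo
    (fun m hm => Finset.mem_coe.2 (hf_mem m hm)) (Finset.finite_toSet _)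
  obtain ⟨k, rfl⟩ := Nat.exists_eq_add_of_le hlt.le
  have hy : (f m).2 ∈ factors q := Multiset.mem_toFinset.1 (Finset.mem_product.1 (hf_mem m hm)).2
  have hshift : Associated ((σ ^ m) (f m).2) ((σ ^ (m + k)) (f m).2) :=
    (hf_assoc m hm).symm.trans (hf ▸ hf_assoc _ hm')
  exact ⟨_, irreducible_of_factor _ hy, dvd_of_mem_factors hy, k, by omega,
    associated_pow_apply_of_associated_pow_add_apply σ hshift⟩

end Spread

theorem stmt11_general {F : Type*} [Field F]
    (σ : MvPolynomial (Fin 2) F ≃ₐ[F] MvPolynomial (Fin 2) F)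
    (a b ainf abar binf bbar : MvPolynomial (Fin 2) F)
    (ha0 : a ≠ 0) (hb0 : b ≠ 0)
    (ha : a = ainf * abar) (hb : b = binf * bbar)
    (hbbar : ∀ d, Irreducible d → d ∣ bbar → Dis σ d d ≠ ⊤) :
    (Spr σ abar bbar).Finite := by
  by_contra hinf
  obtain ⟨y, hy, hyb, k, hk, hper⟩ := exists_periodic_factor_of_Spr_infinite σ
    (right_ne_zero_of_mul (ha ▸ ha0)) (right_ne_zero_of_mul (hb ▸ hb0)) hinf
  exact hbbar y hy hyb (Dis_self_eq_top_of_associated_pow_apply σ hy hk hper)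

theorem stmt11 {F : Type*} [Field F]
    (σ : MvPolynomial (Fin 2) F ≃ₐ[F] MvPolynomial (Fin 2) F)
    (hdeg : ∀ p : MvPolynomial (Fin 2) F, (σ p).totalDegree = p.totalDegree)
    (a b ainf abar binf bbar : MvPolynomial (Fin 2) F)
    (ha0 : a ≠ 0) (hb0 : b ≠ 0)
    (ha : a = ainf * abar) (hb : b = binf * bbar)
    (hainf : ∀ d, Irreducible d → d ∣ ainf → Dis σ d d = ⊤)
    (habar : ∀ d, Irreducible d → d ∣ abar → Dis σ d d ≠ ⊤)
    (hbinf : ∀ d, Irreducible d → d ∣ binf → Dis σ d d = ⊤)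
    (hbbar : ∀ d, Irreducible d → d ∣ bbar → Dis σ d d ≠ ⊤) :
    (Spr σ abar bbar).Finite :=
  stmt11_general σ a b ainf abar binf bbar ha0 hb0 ha hb hbbar
end
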